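/- arXiv:2604.26748 — 6 statements merged into one kernel-verified Lean document; each statement's English description precedes it below -/
import Mathlib

section
/- Let S be a finite state set, γ ∈ (0,1), A a finite action set, R : S × A → ℝ a reward function, and for each (s,a) let U_{(s,a)} be a nonempty set of probability distributions on S. Define the robust Bellman operator B on functions v : S → ℝ by B(v)(s) = max_a [ R(s,a) + γ · inf_{u ∈ U_{(s,a)}} Σ_{s'} u(s') v(s') ]. Then B is a γ-contraction with respect to the supremum norm: ‖B(v) − B(w)‖_∞ ≤ γ ‖v − w‖_∞ for all v, w : S → ℝ. -/
open Finset

def IsDist {S : Type*} [Fintype S] (u : S → ℝ) : Prop :=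
  (∀ s, 0 ≤ u s) ∧ ∑ s, u s = 1

noncomputable def bellman {S A : Type*} [Fintype S] [Fintype A] [Nonempty A]
    (γ : ℝ) (R : S → A → ℝ) (U : S → A → Set (S → ℝ)) (v : S → ℝ) : S → ℝ :=
  fun s => Finset.univ.sup' Finset.univ_nonempty fun a =>
    R s a + γ * sInf ((fun u => ∑ s', u s' * v s') '' U s a)

private lemma dist_sum_le {S : Type*} [Fintype S] {u : S → ℝ} (hu : IsDist u)
    (x : S → ℝ) : ∑ s, u s * x s ≤ ‖x‖ := by
  calc ∑ s, u s * x s ≤ ∑ s, u s * ‖x‖ := by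
        refine Finset.sum_le_sum fun s _ => mul_le_mul_of_nonneg_left ?_ (hu.1 s)
        exact le_trans (le_abs_self _) (norm_le_pi_norm x s)
    _ = ‖x‖ := by rw [← Finset.sum_mul, hu.2, one_mul]

private lemma dist_sum_ge {S : Type*} [Fintype S] {u : S → ℝ} (hu : IsDist u)
    (x : S → ℝ) : -‖x‖ ≤ ∑ s, u s * x s := by
  have h := dist_sum_le hu (-x)
  rw [norm_neg] at h
  simp only [Pi.neg_apply, mul_neg, Finset.sum_neg_distrib] at h
  linarith

private lemma sInf_le_sInf_add {S : Type*} [Fintype S] (Usa : Set (S → ℝ))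
    (hne : Usa.Nonempty) (hdist : ∀ u ∈ Usa, IsDist u) (v w : S → ℝ) :
    sInf ((fun u => ∑ s', u s' * v s') '' Usa) ≤
      sInf ((fun u => ∑ s', u s' * w s') '' Usa) + ‖v - w‖ := by
  have hbdd : BddBelow ((fun u => ∑ s', u s' * v s') '' Usa) := by
    refine ⟨-‖v‖, ?_⟩
    rintro x ⟨u, hu, rfl⟩
    exact dist_sum_ge (hdist u hu) v
  have key : ∀ b ∈ ((fun u => ∑ s', u s' * w s') '' Usa),
      sInf ((fun u => ∑ s', u s' * v s') '' Usa) - ‖v - w‖ ≤ b := by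
    rintro b ⟨u, hu, rfl⟩
    have h1 : sInf ((fun u => ∑ s', u s' * v s') '' Usa) ≤ ∑ s', u s' * v s' :=
      csInf_le hbdd ⟨u, hu, rfl⟩
    have h2 : ∑ s', u s' * v s' - ∑ s', u s' * w s' ≤ ‖v - w‖ := by
      have := dist_sum_le (hdist u hu) (v - w)
      simp only [Pi.sub_apply, mul_sub] at this
      rw [Finset.sum_sub_distrib] at this
      linarith
    show sInf ((fun u => ∑ s', u s' * v s') '' Usa) - ‖v - w‖ ≤ ∑ s', u s' * w s'
    linarith
  have h3 := le_csInf (hne.image (fun u => ∑ s', u s' * w s')) key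
  linarith

private lemma bellman_le {S A : Type*} [Fintype S] [Fintype A] [Nonempty A]
    {γ : ℝ} (hγ0 : 0 ≤ γ)
    (R : S → A → ℝ) (U : S → A → Set (S → ℝ))
    (hUne : ∀ s a, (U s a).Nonempty)
    (hUdist : ∀ s a, ∀ u ∈ U s a, IsDist u)
    (v w : S → ℝ) (s : S) :
    bellman γ R U v s ≤ bellman γ R U w s + γ * ‖v - w‖ := by
  unfold bellman
  refine Finset.sup'_le _ _ fun a _ => ?_
  have h1 : sInf ((fun u => ∑ s', u s' * v s') '' U s a) ≤
      sInf ((fun u => ∑ s', u s' * w s') '' U s a) + ‖v - w‖ :=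
    sInf_le_sInf_add (U s a) (hUne s a) (hUdist s a) v w
  have h2 : R s a + γ * sInf ((fun u => ∑ s', u s' * w s') '' U s a) ≤
      Finset.univ.sup' Finset.univ_nonempty fun a =>
        R s a + γ * sInf ((fun u => ∑ s', u s' * w s') '' U s a) :=
    Finset.le_sup' (fun a => R s a + γ * sInf ((fun u => ∑ s', u s' * w s') '' U s a))
      (Finset.mem_univ a)
  nlinarith [mul_le_mul_of_nonneg_left h1 hγ0]

theorem bellman_contraction {S A : Type*} [Fintype S] [Fintype A] [Nonempty A]
    (γ : ℝ) (hγ : γ ∈ Set.Ioo (0 : ℝ) 1)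
    (R : S → A → ℝ) (U : S → A → Set (S → ℝ))
    (hUne : ∀ s a, (U s a).Nonempty)
    (hUdist : ∀ s a, ∀ u ∈ U s a, IsDist u)
    (v w : S → ℝ) :
    ‖bellman γ R U v - bellman γ R U w‖ ≤ γ * ‖v - w‖ := by
  have hγ0 : (0 : ℝ) ≤ γ := hγ.1.le
  refine (pi_norm_le_iff_of_nonneg (mul_nonneg hγ0 (norm_nonneg _))).2 fun s => ?_
  rw [Pi.sub_apply, Real.norm_eq_abs, abs_sub_le_iff]
  constructor
  · have := bellman_le hγ0 R U hUne hUdist v w s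
    linarith
  · have := bellman_le hγ0 R U hUne hUdist w v s
    rw [norm_sub_rev] at this
    linarith
end

section
/- Suboptimality test: Let B be the robust Bellman operator with unique fixed point v*. Suppose x : S → ℝ and b ≤ c are reals with x + b·1 ≤ v* ≤ x + c·1 pointwise. If for some state s and action a it holds that R(s,a) + γ inf_{u∈U_{(s,a)}} Σ_{s'} u(s') x(s') < B(x)(s) − γ(c − b), then R(s,a) + γ inf_{u∈U_{(s,a)}} Σ_{s'} u(s') v*(s') < v*(s), i.e., action a does not attain the maximum in the Bellman equation at s (a is suboptimal). -/
open Finset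

noncomputable def Qval {S A : Type*} [Fintype S] [Fintype A]
    (γ : ℝ) (R : S → A → ℝ) (U : S → A → Set (S → ℝ)) (v : S → ℝ) (s : S) (a : A) : ℝ :=
  R s a + γ * sInf ((fun u => ∑ s', u s' * v s') '' U s a)

lemma key_shift {S : Type*} [Fintype S] {K : Set (S → ℝ)} (hne : K.Nonempty)
    (hK : IsCompact K) (hd : ∀ u ∈ K, IsDist u) (v w : S → ℝ) (k : ℝ)
    (h : ∀ s, v s + k ≤ w s) :
    sInf ((fun u => ∑ s', u s' * v s') '' K) + k ≤
      sInf ((fun u => ∑ s', u s' * w s') '' K) := by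
  have hcont : ∀ f : S → ℝ, Continuous (fun u : S → ℝ => ∑ s', u s' * f s') :=
    fun f => continuous_finset_sum _ fun s' _ => (continuous_apply s').mul continuous_const
  obtain ⟨u₀, hu₀K, hmin⟩ := hK.exists_isMinOn hne ((hcont w).continuousOn)
  have h1 : sInf ((fun u => ∑ s', u s' * v s') '' K) ≤ ∑ s', u₀ s' * v s' :=
    csInf_le (hK.image (hcont v)).bddBelow ⟨u₀, hu₀K, rfl⟩
  obtain ⟨hpos, hsum⟩ := hd u₀ hu₀K
  have h2 : (∑ s', u₀ s' * v s') + k ≤ ∑ s', u₀ s' * w s' := by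
    have e : (∑ s', u₀ s' * v s') + k = ∑ s', u₀ s' * (v s' + k) := by
      simp [mul_add, Finset.sum_add_distrib, ← Finset.sum_mul, hsum]
    rw [e]
    exact Finset.sum_le_sum fun s' _ => mul_le_mul_of_nonneg_left (h s') (hpos s')
  have h3 : (∑ s', u₀ s' * w s') ≤ sInf ((fun u => ∑ s', u s' * w s') '' K) := by
    apply le_csInf (hne.image _)
    rintro y ⟨u, huK, rfl⟩
    exact hmin huK
  linarith

theorem suboptimality_test {S A : Type*} [Fintype S] [Fintype A] [Nonempty A]
    (γ : ℝ) (hγ : γ ∈ Set.Ioo (0 : ℝ) 1)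
    (R : S → A → ℝ) (U : S → A → Set (S → ℝ))
    (hUne : ∀ s a, (U s a).Nonempty)
    (hUcomp : ∀ s a, IsCompact (U s a))
    (hUdist : ∀ s a, ∀ u ∈ U s a, IsDist u)
    (vstar : S → ℝ) (hfix : bellman γ R U vstar = vstar)
    (huniq : ∀ w : S → ℝ, bellman γ R U w = w → w = vstar)
    (x : S → ℝ) (b c : ℝ) (hbc : b ≤ c)
    (hlow : ∀ s, x s + b ≤ vstar s) (hhigh : ∀ s, vstar s ≤ x s + c)
    (s : S) (a : A)
    (hlt : Qval γ R U x s a < bellman γ R U x s - γ * (c - b)) :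
    Qval γ R U vstar s a < vstar s := by
  obtain ⟨hγ0, hγ1⟩ := hγ
  -- step 1: Qval vstar ≤ Qval x + γ c
  have h1 : Qval γ R U vstar s a ≤ Qval γ R U x s a + γ * c := by
    have := key_shift (hUne s a) (hUcomp s a) (hUdist s a) vstar x (-c)
      (fun s' => by linarith [hhigh s'])
    unfold Qval
    nlinarith
  -- step 3: bellman x s + γ b ≤ bellman vstar s
  have h3 : bellman γ R U x s + γ * b ≤ bellman γ R U vstar s := by
    unfold bellman
    rw [← le_sub_iff_add_le]
    apply Finset.sup'_le
    intro a' _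
    have hk := key_shift (hUne s a') (hUcomp s a') (hUdist s a') x vstar b hlow
    have hle : R s a' + γ * sInf ((fun u => ∑ s', u s' * vstar s') '' U s a') ≤
        Finset.univ.sup' Finset.univ_nonempty fun a'' =>
          R s a'' + γ * sInf ((fun u => ∑ s', u s' * vstar s') '' U s a'') :=
      Finset.le_sup' (fun a'' => R s a'' + γ * sInf ((fun u => ∑ s', u s' * vstar s') '' U s a'')) (Finset.mem_univ a')
    nlinarith
  have h4 : bellman γ R U vstar s = vstar s := congrFun hfix s
  linarith
end

section
/- Let Q(v)(s,a) = R(s,a) + γ inf_{u∈U_{(s,a)}} Σ_{s'} u(s') v(s'). Setting b = (1/(1−γ)) min_s (B(x)−x)(s) and c = (1/(1−γ)) max_s (B(x)−x)(s), we have x + b·1 ≤ v* ≤ x + c·1, where v* is the unique fixed point of B. Consequently, if Q(x)(s,a) < B(x)(s) − (γ/(1−γ))·span(B(x) − x) with span(y) = max_s y(s) − min_s y(s), then action a is suboptimal at s (i.e., Q(v*)(s,a) < v*(s)). -/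
/-!
Both `Q(·)(s,a)` and the robust Bellman operator `B` are monotone and shift constants by a factor
`γ`. For such an operator `T` with fixed point `v`, every subsolution `w ≤ T w` lies below `v`:
if `m = min (v - w)`, then `w ≤ v - m` gives `w ≤ T w ≤ v - γ m`, so `m ≥ γ m`, i.e. `m ≥ 0`.
With `m = min (B x - x)` and `b = m / (1 - γ)` we have `b = m + γ b`, so `x + b` is a subsolution;
dually `x + c` is a supersolution. Suboptimality then follows from
`Q(v*) ≤ Q(x + c) = Q(x) + γ c < B(x) + γ b = B(x + b) ≤ B(v*) = v*`.
-/

open Finset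

namespace IsDist

variable {S : Type*} [Fintype S] {u : S → ℝ}

lemma sum_mul_le_sum_mul (hu : IsDist u) {v w : S → ℝ} (h : v ≤ w) :
    ∑ s, u s * v s ≤ ∑ s, u s * w s :=
  sum_le_sum fun s _ => mul_le_mul_of_nonneg_left (h s) (hu.1 s)

lemma sum_mul_const (hu : IsDist u) (c : ℝ) : ∑ s, u s * c = c := by
  rw [← sum_mul, hu.2, one_mul]

lemma sum_mul_add_const (hu : IsDist u) (v : S → ℝ) (c : ℝ) :
    ∑ s, u s * (v s + c) = ∑ s, u s * v s + c := by
  simp only [mul_add, sum_add_distrib, hu.sum_mul_const]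

end IsDist

section WorstCaseExpectation

variable {S : Type*} [Fintype S] [Nonempty S] {U : Set (S → ℝ)}

lemma bddBelow_image_sum_mul (hU : ∀ u ∈ U, IsDist u) (v : S → ℝ) :
    BddBelow ((fun u => ∑ s, u s * v s) '' U) := by
  refine ⟨univ.inf' univ_nonempty v, ?_⟩
  rintro _ ⟨u, hu, rfl⟩
  calc univ.inf' univ_nonempty v = ∑ s, u s * univ.inf' univ_nonempty v :=
        ((hU u hu).sum_mul_const _).symm
    _ ≤ ∑ s, u s * v s := (hU u hu).sum_mul_le_sum_mul fun s => inf'_le v (mem_univ s)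

lemma sInf_image_sum_mul_mono (hne : U.Nonempty) (hU : ∀ u ∈ U, IsDist u) :
    Monotone fun v : S → ℝ => sInf ((fun u => ∑ s, u s * v s) '' U) := by
  intro v w h
  refine le_csInf (hne.image _) ?_
  rintro _ ⟨u, hu, rfl⟩
  exact (csInf_le (bddBelow_image_sum_mul hU v) ⟨u, hu, rfl⟩).trans
    ((hU u hu).sum_mul_le_sum_mul h)

lemma sInf_image_sum_mul_add_const (hne : U.Nonempty) (hU : ∀ u ∈ U, IsDist u)
    (v : S → ℝ) (c : ℝ) :
    sInf ((fun u => ∑ s, u s * (v s + c)) '' U) = sInf ((fun u => ∑ s, u s * v s) '' U) + c := by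
  have h := (OrderIso.addRight c).map_csInf' (hne.image _) (bddBelow_image_sum_mul hU v)
  rw [OrderIso.addRight_apply, Set.image_image] at h
  rw [h]
  exact congrArg sInf (Set.image_congr fun u hu => (hU u hu).sum_mul_add_const v c)

end WorstCaseExpectation

section RobustBellman

variable {S A : Type*} [Fintype S] [Fintype A] [Nonempty S]
  {γ : ℝ} {R : S → A → ℝ} {U : S → A → Set (S → ℝ)}
  (hUne : ∀ s a, (U s a).Nonempty) (hUdist : ∀ s a, ∀ u ∈ U s a, IsDist u)
include hUne hUdist

lemma Qval_mono (hγ : 0 ≤ γ) (s : S) (a : A) : Monotone fun v => Qval γ R U v s a :=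
  fun _ _ h => add_le_add_right
    (mul_le_mul_of_nonneg_left (sInf_image_sum_mul_mono (hUne s a) (hUdist s a) h) hγ) _

lemma Qval_add_const (v : S → ℝ) (c : ℝ) (s : S) (a : A) :
    Qval γ R U (v + fun _ => c) s a = Qval γ R U v s a + γ * c := by
  simp only [Qval, Pi.add_apply, sInf_image_sum_mul_add_const (hUne s a) (hUdist s a)]
  ring

variable [Nonempty A]

lemma bellman_mono (hγ : 0 ≤ γ) : Monotone (bellman γ R U) :=
  fun _ _ h s => sup'_mono_fun fun a _ => Qval_mono hUne hUdist hγ s a h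

lemma bellman_add_const (v : S → ℝ) (c : ℝ) :
    bellman γ R U (v + fun _ => c) = bellman γ R U v + fun _ => γ * c := by
  funext s
  simp only [bellman, Pi.add_apply, sup'_add]
  exact sup'_congr _ rfl fun a _ => Qval_add_const hUne hUdist v c s a

end RobustBellman

section FixedPointBounds

variable {S : Type*} [Fintype S] [Nonempty S] {T : (S → ℝ) → S → ℝ} {γ : ℝ}
  (hT : Monotone T) (hTc : ∀ v c, T (v + fun _ => c) = T v + fun _ => γ * c) (hγ : γ < 1)
  {v : S → ℝ} (hv : T v = v)
include hT hTc hγ hv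

lemma le_fixedPoint_of_le_map {w : S → ℝ} (hw : w ≤ T w) : w ≤ v := by
  obtain ⟨s₀, hs₀⟩ := Finite.exists_min (v - w)
  set m := v s₀ - w s₀
  have hle : w ≤ v + fun _ => -m := fun s => by
    have := hs₀ s
    simp only [Pi.sub_apply, Pi.add_apply] at this ⊢
    linarith
  have hγm : w ≤ v + fun _ => γ * -m := by
    calc w ≤ T w := hw
      _ ≤ T (v + fun _ => -m) := hT hle
      _ = v + fun _ => γ * -m := by rw [hTc, hv]
  have hm : 0 ≤ m := by
    have := hγm s₀
    simp only [Pi.add_apply] at this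
    nlinarith
  intro s
  have := hs₀ s
  simp only [Pi.sub_apply] at this
  linarith

lemma fixedPoint_le_of_map_le {w : S → ℝ} (hw : T w ≤ w) : v ≤ w := by
  obtain ⟨s₀, hs₀⟩ := Finite.exists_max (v - w)
  set M := v s₀ - w s₀
  have hle : v ≤ w + fun _ => M := fun s => by
    have := hs₀ s
    simp only [Pi.sub_apply, Pi.add_apply] at this ⊢
    linarith
  have hγM : v ≤ w + fun _ => γ * M := by
    calc v = T v := hv.symm
      _ ≤ T (w + fun _ => M) := hT hle
      _ = T w + fun _ => γ * M := hTc w M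
      _ ≤ w + fun _ => γ * M := add_le_add_left hw _
  have hM : M ≤ 0 := by
    have := hγM s₀
    simp only [Pi.add_apply] at this
    nlinarith
  intro s
  have := hs₀ s
  simp only [Pi.sub_apply] at this
  linarith

lemma add_inf'_residual_le_fixedPoint (x : S → ℝ) :
    x + (fun _ => (1 - γ)⁻¹ * univ.inf' univ_nonempty (fun s => T x s - x s)) ≤ v := by
  set m := univ.inf' univ_nonempty (fun s => T x s - x s)
  have hb : m + γ * ((1 - γ)⁻¹ * m) = (1 - γ)⁻¹ * m := by
    field_simp [(sub_pos.2 hγ).ne']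
    ring
  refine le_fixedPoint_of_le_map hT hTc hγ hv fun s => ?_
  have := inf'_le (fun s => T x s - x s) (mem_univ s)
  rw [hTc]
  simp only [Pi.add_apply] at this ⊢
  linarith

lemma fixedPoint_le_add_sup'_residual (x : S → ℝ) :
    v ≤ x + (fun _ => (1 - γ)⁻¹ * univ.sup' univ_nonempty (fun s => T x s - x s)) := by
  set M := univ.sup' univ_nonempty (fun s => T x s - x s)
  have hc : M + γ * ((1 - γ)⁻¹ * M) = (1 - γ)⁻¹ * M := by
    field_simp [(sub_pos.2 hγ).ne']
    ring
  refine fixedPoint_le_of_map_le hT hTc hγ hv fun s => ?_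
  have := le_sup' (fun s => T x s - x s) (mem_univ s)
  rw [hTc]
  simp only [Pi.add_apply] at this ⊢
  linarith

end FixedPointBounds

theorem suboptimality_span_general {S A : Type*} [Fintype S] [Fintype A] [Nonempty S] [Nonempty A]
    (γ : ℝ) (hγ : γ ∈ Set.Ioo (0 : ℝ) 1)
    (R : S → A → ℝ) (U : S → A → Set (S → ℝ))
    (hUne : ∀ s a, (U s a).Nonempty)
    (hUdist : ∀ s a, ∀ u ∈ U s a, IsDist u)
    (vstar : S → ℝ) (hfix : bellman γ R U vstar = vstar)
    (x : S → ℝ) :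
    (∀ s, x s + (1 - γ)⁻¹ * (Finset.univ.inf' Finset.univ_nonempty
        (fun s' => bellman γ R U x s' - x s')) ≤ vstar s ∧
      vstar s ≤ x s + (1 - γ)⁻¹ * (Finset.univ.sup' Finset.univ_nonempty
        (fun s' => bellman γ R U x s' - x s'))) ∧
    (∀ s a, Qval γ R U x s a < bellman γ R U x s - γ / (1 - γ) *
        ((Finset.univ.sup' Finset.univ_nonempty (fun s' => bellman γ R U x s' - x s')) -
         (Finset.univ.inf' Finset.univ_nonempty (fun s' => bellman γ R U x s' - x s'))) →
      Qval γ R U vstar s a < vstar s) := by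
  have hmono := bellman_mono (R := R) hUne hUdist hγ.1.le
  have hshift := bellman_add_const (γ := γ) (R := R) hUne hUdist
  have hlow := add_inf'_residual_le_fixedPoint hmono hshift hγ.2 hfix x
  have hhigh := fixedPoint_le_add_sup'_residual hmono hshift hγ.2 hfix x
  refine ⟨fun s => ⟨hlow s, hhigh s⟩, fun s a hQ => ?_⟩
  set m := univ.inf' univ_nonempty (fun s => bellman γ R U x s - x s)
  set M := univ.sup' univ_nonempty (fun s => bellman γ R U x s - x s)
  have hspan : γ / (1 - γ) * (M - m) = γ * ((1 - γ)⁻¹ * M) - γ * ((1 - γ)⁻¹ * m) := by ring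
  set b := (1 - γ)⁻¹ * m
  set c := (1 - γ)⁻¹ * M
  calc Qval γ R U vstar s a ≤ Qval γ R U (x + fun _ => c) s a :=
        Qval_mono hUne hUdist hγ.1.le s a hhigh
    _ = Qval γ R U x s a + γ * c := Qval_add_const hUne hUdist x c s a
    _ < bellman γ R U x s + γ * b := by linarith
    _ = bellman γ R U (x + fun _ => b) s := by rw [hshift]; rfl
    _ ≤ bellman γ R U vstar s := hmono hlow s
    _ = vstar s := congrFun hfix s

theorem suboptimality_span {S A : Type*} [Fintype S] [Fintype A] [Nonempty S] [Nonempty A]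
    (γ : ℝ) (hγ : γ ∈ Set.Ioo (0 : ℝ) 1)
    (R : S → A → ℝ) (U : S → A → Set (S → ℝ))
    (hUne : ∀ s a, (U s a).Nonempty)
    (hUcomp : ∀ s a, IsCompact (U s a))
    (hUdist : ∀ s a, ∀ u ∈ U s a, IsDist u)
    (vstar : S → ℝ) (hfix : bellman γ R U vstar = vstar)
    (huniq : ∀ w : S → ℝ, bellman γ R U w = w → w = vstar)
    (x : S → ℝ) :
    (∀ s, x s + (1 - γ)⁻¹ * (Finset.univ.inf' Finset.univ_nonempty
        (fun s' => bellman γ R U x s' - x s')) ≤ vstar s ∧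
      vstar s ≤ x s + (1 - γ)⁻¹ * (Finset.univ.sup' Finset.univ_nonempty
        (fun s' => bellman γ R U x s' - x s'))) ∧
    (∀ s a, Qval γ R U x s a < bellman γ R U x s - γ / (1 - γ) *
        ((Finset.univ.sup' Finset.univ_nonempty (fun s' => bellman γ R U x s' - x s')) -
         (Finset.univ.inf' Finset.univ_nonempty (fun s' => bellman γ R U x s' - x s'))) →
      Qval γ R U vstar s a < vstar s) :=
  suboptimality_span_general γ hγ R U hUne hUdist vstar hfix x
end

section
/- The operator F(d)(s₁,s₂) = max_a [ (1−γ)|R(s₁,a) − R(s₂,a)| + γ D_K(d)(P(s₁,a), P(s₂,a)) ] is a γ-contraction on the space of bounded nonnegative symmetric functions d : S × S → [0,∞) with the supremum norm. -/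
open Finset

def IsCoupling {S : Type*} [Fintype S] (lam : S → S → ℝ) (μ ν : S → ℝ) : Prop :=
  (∀ x y, 0 ≤ lam x y) ∧ (∀ x, ∑ y, lam x y = μ x) ∧ (∀ y, ∑ x, lam x y = ν y)

noncomputable def kant {S : Type*} [Fintype S] (d : S → S → ℝ) (μ ν : S → ℝ) : ℝ :=
  sInf { r | ∃ lam, IsCoupling lam μ ν ∧ r = ∑ x, ∑ y, lam x y * d x y }

def IsPseudometric {S : Type*} (d : S → S → ℝ) : Prop :=
  (∀ x y, 0 ≤ d x y) ∧ (∀ x, d x x = 0) ∧ (∀ x y, d x y = d y x) ∧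
    (∀ x y z, d x z ≤ d x y + d y z)

noncomputable def Fop {S A : Type*} [Fintype S] [Fintype A] [Nonempty A]
    (cR cT : ℝ) (R : S → A → ℝ) (P : S → A → (S → ℝ)) (d : S → S → ℝ) : S → S → ℝ :=
  fun s1 s2 => Finset.univ.sup' Finset.univ_nonempty fun a =>
    cR * |R s1 a - R s2 a| + cT * kant d (P s1 a) (P s2 a)

lemma coupling_exists {S : Type*} [Fintype S] {μ ν : S → ℝ}
    (hμ : IsDist μ) (hν : IsDist ν) :
    IsCoupling (fun x y => μ x * ν y) μ ν := by
  refine ⟨fun x y => mul_nonneg (hμ.1 x) (hν.1 y), fun x => ?_, fun y => ?_⟩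
  · rw [← Finset.mul_sum, hν.2, mul_one]
  · rw [← Finset.sum_mul, hμ.2, one_mul]

lemma kant_set_nonempty {S : Type*} [Fintype S] {μ ν : S → ℝ} (d : S → S → ℝ)
    (hμ : IsDist μ) (hν : IsDist ν) :
    { r | ∃ lam, IsCoupling lam μ ν ∧ r = ∑ x, ∑ y, lam x y * d x y }.Nonempty :=
  ⟨_, _, coupling_exists hμ hν, rfl⟩

lemma kant_set_bdd {S : Type*} [Fintype S] {μ ν : S → ℝ} {d : S → S → ℝ}
    (hd : ∀ x y, 0 ≤ d x y) :
    BddBelow { r | ∃ lam, IsCoupling lam μ ν ∧ r = ∑ x, ∑ y, lam x y * d x y } := by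
  refine ⟨0, fun r ⟨lam, hlam, hr⟩ => ?_⟩
  subst hr
  exact Finset.sum_nonneg fun x _ => Finset.sum_nonneg fun y _ =>
    mul_nonneg (hlam.1 x y) (hd x y)

lemma kant_le_kant {S : Type*} [Fintype S] {μ ν : S → ℝ} {d₁ d₂ : S → S → ℝ} {ε : ℝ}
    (hμ : IsDist μ) (hν : IsDist ν)
    (hd₂ : ∀ x y, 0 ≤ d₂ x y)
    (hε : ∀ x y, d₂ x y ≤ d₁ x y + ε) :
    kant d₂ μ ν ≤ kant d₁ μ ν + ε := by
  rw [← sub_le_iff_le_add]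
  apply le_csInf (kant_set_nonempty d₁ hμ hν)
  rintro r ⟨lam, hlam, rfl⟩
  rw [sub_le_iff_le_add]
  have hsum1 : ∑ x, ∑ y, lam x y = 1 := by
    have := hμ.2
    simp only [hlam.2.1]
    exact this
  calc kant d₂ μ ν ≤ ∑ x, ∑ y, lam x y * d₂ x y :=
        csInf_le (kant_set_bdd hd₂) ⟨lam, hlam, rfl⟩
    _ ≤ ∑ x, ∑ y, lam x y * (d₁ x y + ε) := by
        refine Finset.sum_le_sum fun x _ => Finset.sum_le_sum fun y _ =>
          mul_le_mul_of_nonneg_left (hε x y) (hlam.1 x y)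
    _ = (∑ x, ∑ y, lam x y * d₁ x y) + (∑ x, ∑ y, lam x y) * ε := by
        simp [mul_add, Finset.sum_add_distrib, Finset.sum_mul]
    _ = (∑ x, ∑ y, lam x y * d₁ x y) + ε := by rw [hsum1, one_mul]

lemma abs_kant_sub {S : Type*} [Fintype S] {μ ν : S → ℝ} {d₁ d₂ : S → S → ℝ} {ε : ℝ}
    (hμ : IsDist μ) (hν : IsDist ν)
    (hd₁ : ∀ x y, 0 ≤ d₁ x y) (hd₂ : ∀ x y, 0 ≤ d₂ x y)
    (hε : ∀ x y, |d₁ x y - d₂ x y| ≤ ε) :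
    |kant d₁ μ ν - kant d₂ μ ν| ≤ ε := by
  have h1 : kant d₁ μ ν ≤ kant d₂ μ ν + ε :=
    kant_le_kant hμ hν hd₁ fun x y => by
      have := abs_le.mp (hε x y); linarith [this.2]
  have h2 : kant d₂ μ ν ≤ kant d₁ μ ν + ε :=
    kant_le_kant hμ hν hd₂ fun x y => by
      have := abs_le.mp (hε x y); linarith [this.1]
  rw [abs_sub_le_iff]
  constructor <;> linarith

theorem Fop_contraction {S A : Type*} [Fintype S] [Fintype A] [Nonempty A]
    (γ : ℝ) (hγ : γ ∈ Set.Ioo (0 : ℝ) 1)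
    (R : S → A → ℝ) (P : S → A → (S → ℝ)) (hP : ∀ s a, IsDist (P s a))
    (d₁ d₂ : S → S → ℝ)
    (hd₁nn : ∀ x y, 0 ≤ d₁ x y) (hd₂nn : ∀ x y, 0 ≤ d₂ x y)
    (hd₁sym : ∀ x y, d₁ x y = d₁ y x) (hd₂sym : ∀ x y, d₂ x y = d₂ y x) :
    ‖Fop (1 - γ) γ R P d₁ - Fop (1 - γ) γ R P d₂‖ ≤ γ * ‖d₁ - d₂‖ := by
  obtain ⟨hγ0, hγ1⟩ := hγ
  have hrhs : 0 ≤ γ * ‖d₁ - d₂‖ := mul_nonneg hγ0.le (norm_nonneg _)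
  have hbound : ∀ x y, |d₁ x y - d₂ x y| ≤ ‖d₁ - d₂‖ := by
    intro x y
    calc |d₁ x y - d₂ x y| = ‖(d₁ - d₂) x y‖ := by simp [Pi.sub_apply]
      _ ≤ ‖(d₁ - d₂) x‖ := norm_le_pi_norm _ y
      _ ≤ ‖d₁ - d₂‖ := norm_le_pi_norm _ x
  rw [pi_norm_le_iff_of_nonneg hrhs]
  intro s₁
  rw [pi_norm_le_iff_of_nonneg hrhs]
  intro s₂
  rw [Pi.sub_apply, Pi.sub_apply, Real.norm_eq_abs, abs_sub_le_iff]
  have hk : ∀ a : A, |kant d₁ (P s₁ a) (P s₂ a) - kant d₂ (P s₁ a) (P s₂ a)| ≤ ‖d₁ - d₂‖ :=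
    fun a => abs_kant_sub (hP s₁ a) (hP s₂ a) hd₁nn hd₂nn hbound
  simp only [Fop]
  constructor
  all_goals {
    rw [sub_le_iff_le_add]
    apply Finset.sup'_le
    intro a _
    have habs := abs_le.mp (hk a)
    have hle := Finset.le_sup' (f := fun a =>
      (1 - γ) * |R s₁ a - R s₂ a| + γ * kant d₂ (P s₁ a) (P s₂ a))
      (b := a) (Finset.mem_univ a)
    have hle' := Finset.le_sup' (f := fun a =>
      (1 - γ) * |R s₁ a - R s₂ a| + γ * kant d₁ (P s₁ a) (P s₂ a))
      (b := a) (Finset.mem_univ a)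
    nlinarith [hle, hle', habs.1, habs.2]
  }
end

section
/- The bisimulation fixed-point operator F coincides with the robust Bellman operator of a specific RMDP: given an MDP (S,A,P,R,γ), define an RMDP on state space S×S with reward R'((s,s'),a) = (1−γ)|R(s,a)−R(s',a)| and (s,a)-rectangular uncertainty sets U_{((s,s'),a)} equal to the set of couplings Λ_{P(s,a),P(s',a)}. Then for every function V : S×S → ℝ and every (s,s'), B(V)(s,s') = max_a [ (1−γ)|R(s,a)−R(s',a)| + γ D_K(V)(P(s,a),P(s',a)) ], where B is the robust Bellman operator of this RMDP. Consequently the unique fixed point of B equals the (1−γ,γ)-fixed-point bisimulation metric. -/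
open Finset

noncomputable def bisimReward {S A : Type*} (γ : ℝ) (R : S → A → ℝ) :
    S × S → A → ℝ :=
  fun p a => (1 - γ) * |R p.1 a - R p.2 a|

def bisimU {S A : Type*} [Fintype S] (P : S → A → (S → ℝ)) :
    S × S → A → Set (S × S → ℝ) :=
  fun p a => { u | ∃ lam, IsCoupling lam (P p.1 a) (P p.2 a) ∧ ∀ q, u q = lam q.1 q.2 }

theorem bisim_bellman_eq_Fop {S A : Type*} [Fintype S] [Fintype A] [Nonempty A]
    (γ : ℝ) (hγ : γ ∈ Set.Ioo (0 : ℝ) 1)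
    (R : S → A → ℝ) (P : S → A → (S → ℝ)) (hP : ∀ s a, IsDist (P s a)) :
    (∀ (V : S × S → ℝ) (s s' : S),
      bellman γ (bisimReward γ R) (bisimU P) V (s, s') =
        Fop (1 - γ) γ R P (fun t t' => V (t, t')) s s') ∧
    (∀ W : S × S → ℝ,
      bellman γ (bisimReward γ R) (bisimU P) W = W ↔
        (fun p : S × S => Fop (1 - γ) γ R P (fun t t' => W (t, t')) p.1 p.2) = W) := by
  have key : ∀ (V : S × S → ℝ) (s s' : S),
      bellman γ (bisimReward γ R) (bisimU P) V (s, s') =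
        Fop (1 - γ) γ R P (fun t t' => V (t, t')) s s' := by
    intro V s s'
    unfold bellman Fop bisimReward kant
    apply Finset.sup'_congr _ rfl
    intro a _
    have hset : ((fun u => ∑ q, u q * V q) '' bisimU P (s, s') a) =
        { r | ∃ lam, IsCoupling lam (P s a) (P s' a) ∧
            r = ∑ x, ∑ y, lam x y * V (x, y) } := by
      ext r
      constructor
      · rintro ⟨u, ⟨lam, hlam, hu⟩, rfl⟩
        refine ⟨lam, hlam, ?_⟩
        simp only [Fintype.sum_prod_type]
        exact Finset.sum_congr rfl fun x _ => Finset.sum_congr rfl fun y _ => by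
          rw [hu (x, y)]
      · rintro ⟨lam, hlam, rfl⟩
        refine ⟨fun q => lam q.1 q.2, ⟨lam, hlam, fun q => rfl⟩, ?_⟩
        simp only [Fintype.sum_prod_type]
    rw [hset]
  refine ⟨key, fun W => ?_⟩
  constructor
  · intro h
    funext p
    rw [← key W p.1 p.2]
    exact congrFun h (p.1, p.2)
  · intro h
    funext p
    rcases p with ⟨s, s'⟩
    rw [key W s s']
    exact congrFun h (s, s')
end

section
/- The unique fixed point V* of the robust Bellman operator for the bisimulation RMDP (constructed on state pairs with coupling uncertainty sets and reward (1−γ)|R(s,a)−R(s',a)|) is a pseudometric on S: V*(s,s) = 0, V*(s,s') = V*(s',s), and V*(s,s'') ≤ V*(s,s') + V*(s',s'') for all s, s', s'' ∈ S. -/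
open Finset

section aux
variable {S : Type*} [Fintype S]

lemma prod_coupling {μ ν : S → ℝ} (hμ : IsDist μ) (hν : IsDist ν) :
    IsCoupling (fun x y => μ x * ν y) μ ν := by
  refine ⟨fun x y => mul_nonneg (hμ.1 x) (hν.1 y), fun x => ?_, fun y => ?_⟩
  · rw [← Finset.mul_sum, hν.2, mul_one]
  · rw [← Finset.sum_mul, hμ.2, one_mul]

lemma coupling_total {lam : S → S → ℝ} {μ ν : S → ℝ} (h : IsCoupling lam μ ν)
    (hμ : IsDist μ) : ∑ q : S × S, lam q.1 q.2 = 1 := by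
  rw [Fintype.sum_prod_type]
  simp only [h.2.1]
  exact hμ.2

lemma coupling_transpose {lam : S → S → ℝ} {μ ν : S → ℝ} (h : IsCoupling lam μ ν) :
    IsCoupling (fun x y => lam y x) ν μ :=
  ⟨fun x y => h.1 y x, h.2.2, h.2.1⟩

lemma coupling_zero_left {lam : S → S → ℝ} {μ ν : S → ℝ} (h : IsCoupling lam μ ν)
    {y : S} (hy : ν y = 0) (x : S) : lam x y = 0 := by
  have h1 : lam x y ≤ ∑ x', lam x' y :=
    Finset.single_le_sum (fun i _ => h.1 i y) (Finset.mem_univ x)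
  have := h.2.2 y
  linarith [h.1 x y]

lemma coupling_sum_ge {lam : S → S → ℝ} {μ ν : S → ℝ} (h : IsCoupling lam μ ν)
    (hμ : IsDist μ) {v : S × S → ℝ} {c : ℝ} (hc : ∀ q, c ≤ v q) :
    c ≤ ∑ q : S × S, lam q.1 q.2 * v q := by
  have : ∑ q : S × S, lam q.1 q.2 * c ≤ ∑ q : S × S, lam q.1 q.2 * v q :=
    Finset.sum_le_sum fun q _ => mul_le_mul_of_nonneg_left (hc q) (h.1 q.1 q.2)
  calc c = (∑ q : S × S, lam q.1 q.2) * c := by rw [coupling_total h hμ, one_mul]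
    _ = ∑ q : S × S, lam q.1 q.2 * c := by rw [Finset.sum_mul]
    _ ≤ _ := this

lemma glue_coupling {μ ν ρ : S → ℝ} (hμ : IsDist μ)
    {l1 l2 : S → S → ℝ} (h1 : IsCoupling l1 μ ν) (h2 : IsCoupling l2 ν ρ)
    (v : S × S → ℝ) (D : ℝ) (hD : ∀ x y z, v (x, z) ≤ v (x, y) + v (y, z) + D) :
    ∃ l3, IsCoupling l3 μ ρ ∧
      ∑ q : S × S, l3 q.1 q.2 * v q ≤
        (∑ q : S × S, l1 q.1 q.2 * v q) + (∑ q : S × S, l2 q.1 q.2 * v q) + D := by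
  classical
  set l3 : S → S → ℝ := fun x z => ∑ y, l1 x y * l2 y z / ν y with hl3
  have hz1 : ∀ x y, ν y = 0 → l1 x y = 0 := fun x y hy => coupling_zero_left h1 hy x
  have hz2 : ∀ y z, ν y = 0 → l2 y z = 0 := fun y z hy => by
    have h1' : l2 y z ≤ ∑ z', l2 y z' :=
      Finset.single_le_sum (fun i _ => h2.1 y i) (Finset.mem_univ z)
    have := h2.2.1 y
    linarith [h2.1 y z]
  have hνpos : ∀ y, ν y ≠ 0 → 0 < ν y := fun y hy => by
    have : 0 ≤ ν y := by
      have := h2.2.1 y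
      calc (0:ℝ) ≤ ∑ z, l2 y z := Finset.sum_nonneg fun z _ => h2.1 y z
        _ = ν y := this
    exact lt_of_le_of_ne this (Ne.symm hy)
  have hterm : ∀ x y z, 0 ≤ l1 x y * l2 y z / ν y := fun x y z => by
    by_cases hy : ν y = 0
    · simp [hz1 x y hy]
    · exact div_nonneg (mul_nonneg (h1.1 x y) (h2.1 y z)) (hνpos y hy).le
  have hcoup : IsCoupling l3 μ ρ := by
    refine ⟨fun x z => Finset.sum_nonneg fun y _ => hterm x y z, fun x => ?_, fun z => ?_⟩
    · rw [Finset.sum_comm]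
      have : ∀ y, ∑ z, l1 x y * l2 y z / ν y = l1 x y := by
        intro y
        by_cases hy : ν y = 0
        · simp [hz1 x y hy]
        · rw [← Finset.sum_div, ← Finset.mul_sum, h2.2.1 y, mul_div_assoc,
            div_self hy, mul_one]
      simp only [this]; exact h1.2.1 x
    · have : ∀ y, ∑ x, l1 x y * l2 y z / ν y = l2 y z := by
        intro y
        by_cases hy : ν y = 0
        · simp [hz2 y z hy]
        · have : ∑ x, l1 x y * l2 y z / ν y = (∑ x, l1 x y) * (l2 y z / ν y) := by
            rw [Finset.sum_mul]
            exact Finset.sum_congr rfl fun x _ => by ring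
          rw [this, h1.2.2 y, mul_div_assoc']
          rw [mul_comm, mul_div_assoc, div_self hy, mul_one]
      rw [Finset.sum_comm]
      simp only [this]; exact h2.2.2 z
  refine ⟨l3, hcoup, ?_⟩
  have key : ∑ q : S × S, l3 q.1 q.2 * v q ≤
      ∑ x, ∑ z, ∑ y, l1 x y * l2 y z / ν y * (v (x, y) + v (y, z) + D) := by
    rw [Fintype.sum_prod_type]
    refine Finset.sum_le_sum fun x _ => Finset.sum_le_sum fun z _ => ?_
    rw [Finset.sum_mul]
    exact Finset.sum_le_sum fun y _ =>
      mul_le_mul_of_nonneg_left (hD x y z) (hterm x y z)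
  have e1 : ∑ x, ∑ z, ∑ y, l1 x y * l2 y z / ν y * v (x, y) =
      ∑ q : S × S, l1 q.1 q.2 * v q := by
    rw [Fintype.sum_prod_type]
    refine Finset.sum_congr rfl fun x _ => ?_
    rw [Finset.sum_comm]
    refine Finset.sum_congr rfl fun y _ => ?_
    by_cases hy : ν y = 0
    · simp [hz1 x y hy]
    · rw [← Finset.sum_mul, ← Finset.sum_div, ← Finset.mul_sum, h2.2.1 y,
        mul_div_assoc, div_self hy, mul_one]
  have step2 : ∀ y z, ∑ x, l1 x y * l2 y z / ν y * v (y, z) = l2 y z * v (y, z) := by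
    intro y z
    by_cases hy : ν y = 0
    · simp [hz1, hz2 y z hy, hy]
    · have h' : ∑ x, l1 x y * l2 y z / ν y * v (y, z) =
          (∑ x, l1 x y) * (l2 y z / ν y * v (y, z)) := by
        rw [Finset.sum_mul]
        exact Finset.sum_congr rfl fun x _ => by ring
      rw [h', h1.2.2 y]
      field_simp
  have e2 : ∑ x, ∑ z, ∑ y, l1 x y * l2 y z / ν y * v (y, z) =
      ∑ q : S × S, l2 q.1 q.2 * v q := by
    calc ∑ x, ∑ z, ∑ y, l1 x y * l2 y z / ν y * v (y, z)
        = ∑ x, ∑ y, ∑ z, l1 x y * l2 y z / ν y * v (y, z) :=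
          Finset.sum_congr rfl fun x _ => by rw [Finset.sum_comm]
      _ = ∑ y, ∑ x, ∑ z, l1 x y * l2 y z / ν y * v (y, z) := by rw [Finset.sum_comm]
      _ = ∑ y, ∑ z, ∑ x, l1 x y * l2 y z / ν y * v (y, z) :=
          Finset.sum_congr rfl fun y _ => by rw [Finset.sum_comm]
      _ = ∑ y, ∑ z, l2 y z * v (y, z) :=
          Finset.sum_congr rfl fun y _ => Finset.sum_congr rfl fun z _ => step2 y z
      _ = ∑ q : S × S, l2 q.1 q.2 * v q := by rw [Fintype.sum_prod_type]
  have e3 : ∑ x, ∑ z, ∑ y, l1 x y * l2 y z / ν y * D = D := by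
    have hx : ∀ x, ∑ z, ∑ y, l1 x y * l2 y z / ν y * D = μ x * D := by
      intro x
      rw [Finset.sum_comm]
      have hstep : ∀ y, ∑ z, l1 x y * l2 y z / ν y * D = l1 x y * D := by
        intro y
        by_cases hy : ν y = 0
        · simp [hz1 x y hy]
        · have h' : ∑ z, l1 x y * l2 y z / ν y * D =
              (∑ z, l2 y z) * (l1 x y / ν y * D) := by
            rw [Finset.sum_mul]
            exact Finset.sum_congr rfl fun z _ => by ring
          rw [h', h2.2.1 y]
          field_simp
      calc ∑ y, ∑ z, l1 x y * l2 y z / ν y * D = ∑ y, l1 x y * D :=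
            Finset.sum_congr rfl fun y _ => hstep y
        _ = (∑ y, l1 x y) * D := by rw [Finset.sum_mul]
        _ = μ x * D := by rw [h1.2.1 x]
    calc ∑ x, ∑ z, ∑ y, l1 x y * l2 y z / ν y * D = ∑ x, μ x * D :=
          Finset.sum_congr rfl fun x _ => hx x
      _ = (∑ x, μ x) * D := by rw [Finset.sum_mul]
      _ = D := by rw [hμ.2, one_mul]
  calc ∑ q : S × S, l3 q.1 q.2 * v q ≤ _ := key
    _ = (∑ x, ∑ z, ∑ y, l1 x y * l2 y z / ν y * v (x, y)) +
        (∑ x, ∑ z, ∑ y, l1 x y * l2 y z / ν y * v (y, z)) +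
        (∑ x, ∑ z, ∑ y, l1 x y * l2 y z / ν y * D) := by
      simp only [mul_add, Finset.sum_add_distrib]
    _ ≤ _ := by rw [e1, e2, e3]

end aux


section main
variable {S A : Type*} [Fintype S] [Fintype A] [Nonempty S]
variable (P : S → A → (S → ℝ))

noncomputable def Tinf (v : S × S → ℝ) (s t : S) (a : A) : ℝ :=
  sInf ((fun u => ∑ q, u q * v q) '' bisimU P (s, t) a)

variable {P}
variable (hP : ∀ s a, IsDist (P s a))
include hP

lemma Tset_nonempty (v : S × S → ℝ) (s t : S) (a : A) :
    ((fun u => ∑ q, u q * v q) '' bisimU P (s, t) a).Nonempty :=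
  ⟨_, ⟨fun q => P s a q.1 * P t a q.2,
    ⟨fun x y => P s a x * P t a y, prod_coupling (hP s a) (hP t a), fun q => rfl⟩, rfl⟩⟩

lemma Tset_lb {v : S × S → ℝ} {c : ℝ} (hc : ∀ q, c ≤ v q) {s t : S} {a : A} :
    ∀ r ∈ ((fun u => ∑ q, u q * v q) '' bisimU P (s, t) a), c ≤ r := by
  rintro r ⟨u, ⟨lam, hlam, hu⟩, rfl⟩
  have : ∑ q : S × S, u q * v q = ∑ q : S × S, lam q.1 q.2 * v q :=
    Finset.sum_congr rfl fun q _ => by rw [hu q]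
  show c ≤ ∑ q : S × S, u q * v q
  rw [this]
  exact coupling_sum_ge hlam (hP s a) hc

lemma Tset_bddBelow (v : S × S → ℝ) (s t : S) (a : A) :
    BddBelow ((fun u => ∑ q, u q * v q) '' bisimU P (s, t) a) :=
  ⟨(univ : Finset (S × S)).inf' univ_nonempty v,
    fun r hr => Tset_lb hP (fun q => Finset.inf'_le v (mem_univ q)) r hr⟩

lemma le_Tinf {v : S × S → ℝ} {c : ℝ} (hc : ∀ q, c ≤ v q) (s t : S) (a : A) :
    c ≤ Tinf P v s t a :=
  le_csInf (Tset_nonempty hP v s t a) (Tset_lb hP hc)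

lemma Tinf_le {v : S × S → ℝ} {s t : S} {a : A} {lam : S → S → ℝ}
    (hlam : IsCoupling lam (P s a) (P t a)) :
    Tinf P v s t a ≤ ∑ q : S × S, lam q.1 q.2 * v q :=
  csInf_le (Tset_bddBelow hP v s t a)
    ⟨fun q => lam q.1 q.2, ⟨lam, hlam, fun q => rfl⟩, rfl⟩

end main

theorem bisim_fixed_point_pseudometric {S A : Type*} [Fintype S] [Fintype A] [Nonempty A]
    (γ : ℝ) (hγ : γ ∈ Set.Ioo (0 : ℝ) 1)
    (R : S → A → ℝ) (P : S → A → (S → ℝ)) (hP : ∀ s a, IsDist (P s a))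
    (Vstar : S × S → ℝ)
    (hfix : bellman γ (bisimReward γ R) (bisimU P) Vstar = Vstar)
    (huniq : ∀ W : S × S → ℝ, bellman γ (bisimReward γ R) (bisimU P) W = W → W = Vstar) :
    (∀ s, Vstar (s, s) = 0) ∧
    (∀ s s', Vstar (s, s') = Vstar (s', s)) ∧
    (∀ s s' s'', Vstar (s, s'') ≤ Vstar (s, s') + Vstar (s', s'')) := by
  classical
  obtain ⟨hγ0, hγ1⟩ := hγ
  rcases isEmpty_or_nonempty S with hS | hS
  · exact ⟨fun s => isEmptyElim s, fun s => isEmptyElim s, fun s => isEmptyElim s⟩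
  have hfp : ∀ s t : S, Vstar (s, t) = univ.sup' univ_nonempty
      (fun a => (1 - γ) * |R s a - R t a| + γ * Tinf P Vstar s t a) := by
    intro s t
    conv_lhs => rw [← hfix]
    rfl
  -- nonnegativity
  have hnn : ∀ p : S × S, 0 ≤ Vstar p := by
    set c := (univ : Finset (S × S)).inf' univ_nonempty Vstar with hc
    have hlow : ∀ q : S × S, c ≤ Vstar q := fun q => Finset.inf'_le _ (mem_univ q)
    have hge : ∀ s t : S, γ * c ≤ Vstar (s, t) := by
      intro s t
      rw [hfp s t]
      have a0 : A := Classical.arbitrary A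
      refine le_trans ?_ (Finset.le_sup' _ (mem_univ a0))
      have h1 : 0 ≤ (1 - γ) * |R s a0 - R t a0| :=
        mul_nonneg (by linarith) (abs_nonneg _)
      have h2 : γ * c ≤ γ * Tinf P Vstar s t a0 :=
        mul_le_mul_of_nonneg_left (le_Tinf hP hlow s t a0) hγ0.le
      show γ * c ≤ (1 - γ) * |R s a0 - R t a0| + γ * Tinf P Vstar s t a0
      linarith
    have hcge : γ * c ≤ c := by
      obtain ⟨p, _, hp⟩ := Finset.exists_mem_eq_inf' (univ_nonempty) Vstar
      calc γ * c ≤ Vstar (p.1, p.2) := hge p.1 p.2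
        _ = c := by rw [hc, hp]
    have hc0 : 0 ≤ c := by nlinarith
    exact fun p => le_trans hc0 (hlow p)
  -- diagonal
  have hdiag : ∀ s, Vstar (s, s) = 0 := by
    set M := (univ : Finset S).sup' univ_nonempty (fun s => Vstar (s, s)) with hM
    have hub : ∀ s, Vstar (s, s) ≤ γ * M := by
      intro s
      rw [hfp s s]
      refine Finset.sup'_le _ _ fun a _ => ?_
      have hr : (1 - γ) * |R s a - R s a| = 0 := by simp
      have hdl : IsCoupling (fun x y => if x = y then P s a x else (0:ℝ))
          (P s a) (P s a) := by
        refine ⟨fun x y => ?_, fun x => ?_, fun y => ?_⟩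
        · by_cases h : x = y
          · simp [h, (hP s a).1 y]
          · simp [h]
        · simp
        · simp
      have hKle : Tinf P Vstar s s a ≤
          ∑ q : S × S, (if q.1 = q.2 then P s a q.1 else 0) * Vstar q := Tinf_le hP hdl
      have hsum : ∑ q : S × S, (if q.1 = q.2 then P s a q.1 else 0) * Vstar q ≤ M := by
        have he : ∑ q : S × S, (if q.1 = q.2 then P s a q.1 else 0) * Vstar q
            = ∑ x : S, P s a x * Vstar (x, x) := by
          rw [Fintype.sum_prod_type]
          refine Finset.sum_congr rfl fun x _ => ?_
          rw [Finset.sum_eq_single x]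
          · simp
          · intro y _ hy
            simp [Ne.symm hy]
          · intro h
            exact absurd (mem_univ x) h
        rw [he]
        calc ∑ x : S, P s a x * Vstar (x, x) ≤ ∑ x : S, P s a x * M :=
              Finset.sum_le_sum fun x _ =>
                mul_le_mul_of_nonneg_left
                  (Finset.le_sup' (fun s => Vstar (s, s)) (mem_univ x)) ((hP s a).1 x)
          _ = M := by rw [← Finset.sum_mul, (hP s a).2, one_mul]
      have hmul := mul_le_mul_of_nonneg_left (le_trans hKle hsum) hγ0.le
      show (1 - γ) * |R s a - R s a| + γ * Tinf P Vstar s s a ≤ γ * M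
      rw [hr]
      linarith
    have hMle : M ≤ γ * M := by
      obtain ⟨s, _, hs⟩ := Finset.exists_mem_eq_sup' (univ_nonempty) (fun s => Vstar (s, s))
      calc M = Vstar (s, s) := by rw [hM, hs]
        _ ≤ γ * M := hub s
    have hM0 : M ≤ 0 := by nlinarith
    intro s
    have h1 : Vstar (s, s) ≤ γ * M := hub s
    have h2 : 0 ≤ Vstar (s, s) := hnn _
    nlinarith
  -- symmetry
  have hswapset : ∀ (v : S × S → ℝ) (s t : S) (a : A),
      ((fun u : S × S → ℝ => ∑ q, u q * v (q.2, q.1)) '' bisimU P (s, t) a) ⊆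
      ((fun u : S × S → ℝ => ∑ q, u q * v q) '' bisimU P (t, s) a) := by
    rintro v s t a r ⟨u, ⟨lam, hlam, hu⟩, rfl⟩
    refine ⟨fun q => lam q.2 q.1,
      ⟨fun x y => lam y x, coupling_transpose hlam, fun q => rfl⟩, ?_⟩
    show ∑ q : S × S, lam q.2 q.1 * v q = ∑ q : S × S, u q * v (q.2, q.1)
    exact (Fintype.sum_equiv (Equiv.prodComm S S)
      (fun q => u q * v (q.2, q.1)) (fun q => lam q.2 q.1 * v q)
      (fun q => by
        show u q * v (q.2, q.1) = lam q.1 q.2 * v (q.2, q.1)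
        rw [hu q])).symm
  have hsetEq : ∀ (s t : S) (a : A),
      ((fun u : S × S → ℝ => ∑ q, u q * Vstar (q.2, q.1)) '' bisimU P (s, t) a) =
      ((fun u : S × S → ℝ => ∑ q, u q * Vstar q) '' bisimU P (t, s) a) := by
    intro s t a
    refine Set.Subset.antisymm (hswapset Vstar s t a) ?_
    exact fun r hr => hswapset (fun p => Vstar (p.2, p.1)) t s a hr
  have hsymm : ∀ s t : S, Vstar (s, t) = Vstar (t, s) := by
    have hW : bellman γ (bisimReward γ R) (bisimU P) (fun p => Vstar (p.2, p.1)) =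
        (fun p => Vstar (p.2, p.1)) := by
      funext p
      obtain ⟨s, t⟩ := p
      show univ.sup' univ_nonempty
        (fun a => bisimReward γ R (s, t) a + γ * sInf
          ((fun u : S × S → ℝ => ∑ q, u q * Vstar (q.2, q.1)) '' bisimU P (s, t) a))
        = Vstar (t, s)
      rw [hfp t s]
      refine Finset.sup'_congr _ rfl fun a _ => ?_
      have h1 : bisimReward γ R (s, t) a = (1 - γ) * |R t a - R s a| := by
        show (1 - γ) * |R s a - R t a| = (1 - γ) * |R t a - R s a|
        rw [abs_sub_comm]
      rw [h1, hsetEq s t a]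
      rfl
    have hWV := huniq _ hW
    intro s t
    exact (congrFun hWV (s, t)).symm
  -- triangle inequality
  have htri : ∀ s s' s'' : S, Vstar (s, s'') ≤ Vstar (s, s') + Vstar (s', s'') := by
    set D := (univ : Finset (S × S × S)).sup' univ_nonempty
      (fun w => Vstar (w.1, w.2.2) - Vstar (w.1, w.2.1) - Vstar (w.2.1, w.2.2)) with hD
    have hDdef : ∀ x y z : S, Vstar (x, z) ≤ Vstar (x, y) + Vstar (y, z) + D := by
      intro x y z
      have h := Finset.le_sup'
        (f := fun w : S × S × S => Vstar (w.1, w.2.2) - Vstar (w.1, w.2.1) - Vstar (w.2.1, w.2.2))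
        (mem_univ (x, y, z))
      have h' : Vstar (x, z) - Vstar (x, y) - Vstar (y, z) ≤ D := h
      linarith
    have hkey : ∀ s s' s'' : S,
        Vstar (s, s'') - Vstar (s, s') - Vstar (s', s'') ≤ γ * D := by
      intro s s' s''
      obtain ⟨a, _, ha⟩ := Finset.exists_mem_eq_sup' (univ_nonempty (α := A))
        (fun a => (1 - γ) * |R s a - R s'' a| + γ * Tinf P Vstar s s'' a)
      have h13 : Vstar (s, s'') =
          (1 - γ) * |R s a - R s'' a| + γ * Tinf P Vstar s s'' a := by
        rw [hfp s s'', ha]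
      have h12 : (1 - γ) * |R s a - R s' a| + γ * Tinf P Vstar s s' a ≤ Vstar (s, s') := by
        rw [hfp s s']
        exact Finset.le_sup'
          (fun b => (1 - γ) * |R s b - R s' b| + γ * Tinf P Vstar s s' b) (mem_univ a)
      have h23 : (1 - γ) * |R s' a - R s'' a| + γ * Tinf P Vstar s' s'' a ≤
          Vstar (s', s'') := by
        rw [hfp s' s'']
        exact Finset.le_sup'
          (fun b => (1 - γ) * |R s' b - R s'' b| + γ * Tinf P Vstar s' s'' b) (mem_univ a)
      have hK : Tinf P Vstar s s'' a ≤
          Tinf P Vstar s s' a + Tinf P Vstar s' s'' a + D := by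
        refine le_of_forall_pos_le_add fun ε hε => ?_
        obtain ⟨r1, hr1mem, hr1⟩ :=
          Real.lt_sInf_add_pos (Tset_nonempty hP Vstar s s' a) (half_pos hε)
        obtain ⟨u1, ⟨l1, hl1, hu1⟩, hru1⟩ := hr1mem
        obtain ⟨r2, hr2mem, hr2⟩ :=
          Real.lt_sInf_add_pos (Tset_nonempty hP Vstar s' s'' a) (half_pos hε)
        obtain ⟨u2, ⟨l2, hl2, hu2⟩, hru2⟩ := hr2mem
        obtain ⟨l3, hl3, hval⟩ := glue_coupling (hP s a) hl1 hl2 Vstar D hDdef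
        have hr1' : r1 = ∑ q : S × S, l1 q.1 q.2 * Vstar q := by
          rw [← hru1]
          exact Finset.sum_congr rfl fun q _ => by rw [hu1 q]
        have hr2' : r2 = ∑ q : S × S, l2 q.1 q.2 * Vstar q := by
          rw [← hru2]
          exact Finset.sum_congr rfl fun q _ => by rw [hu2 q]
        have hT13 : Tinf P Vstar s s'' a ≤ ∑ q : S × S, l3 q.1 q.2 * Vstar q :=
          Tinf_le hP hl3
        have hrr1 : r1 < Tinf P Vstar s s' a + ε / 2 := hr1
        have hrr2 : r2 < Tinf P Vstar s' s'' a + ε / 2 := hr2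
        linarith [hval, hr1'.symm ▸ hrr1, hr2'.symm ▸ hrr2]
      have habs : |R s a - R s'' a| ≤ |R s a - R s' a| + |R s' a - R s'' a| :=
        abs_sub_le _ _ _
      have h1γ : (0:ℝ) ≤ 1 - γ := by linarith
      have habs' := mul_le_mul_of_nonneg_left habs h1γ
      have hγK := mul_le_mul_of_nonneg_left hK hγ0.le
      rw [mul_add, mul_add] at hγK
      rw [mul_add] at habs'
      linarith
    have hDle : D ≤ γ * D := by
      obtain ⟨w, _, hw⟩ := Finset.exists_mem_eq_sup' (univ_nonempty)
        (fun w : S × S × S => Vstar (w.1, w.2.2) - Vstar (w.1, w.2.1) - Vstar (w.2.1, w.2.2))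
      calc D = Vstar (w.1, w.2.2) - Vstar (w.1, w.2.1) - Vstar (w.2.1, w.2.2) := by
            rw [hD, hw]
        _ ≤ γ * D := hkey w.1 w.2.1 w.2.2
    have hD0 : D ≤ 0 := by nlinarith
    intro s s' s''
    linarith [hDdef s s' s'', hD0]
  exact ⟨hdiag, hsymm, htri⟩
end
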